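/- arXiv:1601.03618 — 3 statements merged into one kernel-verified Lean document; each statement's English description precedes it below -/
import Mathlib

section
/- For a homeomorphism $f$ of a compact metric space $X$ and any $\delta, \epsilon > 0$, the set $C(\delta,\epsilon) = \{\mu \in \mathcal{M}(X) : \exists x \in X, \ \mu(\Gamma_\delta(x)) \ge \epsilon\}$ is closed in the weak* topology on the space $\mathcal{M}(X)$ of Borel probability measures. -/
open MeasureTheory Topology Filter

variable {X : Type*} [MetricSpace X] [CompactSpace X] [MeasurableSpace X] [BorelSpace X]

/-- The dynamical ball `Γ_δ(x)` of a homeomorphism `e`. -/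
def gamma (e : X ≃ₜ X) (δ : ℝ) (x : X) : Set X :=
  {y | ∀ i : ℤ, dist ((e.toEquiv ^ i) x) ((e.toEquiv ^ i) y) ≤ δ}

/-- A measure is expansive if for some `δ > 0` all dynamical `δ`-balls are null. -/
def IsExpansiveMeasure (e : X ≃ₜ X) (μ : Measure X) : Prop :=
  ∃ δ > 0, ∀ x : X, μ (gamma e δ x) = 0

/-- The support of a measure: points all of whose neighborhoods have positive measure. -/
def msupp (μ : Measure X) : Set X := {x | ∀ U ∈ nhds x, 0 < μ U}

section Aux

open Metric Set

set_option linter.unusedSectionVars false in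
lemma continuous_zpow_aux (e : X ≃ₜ X) (i : ℤ) : Continuous fun x => (e.toEquiv ^ i) x := by
  cases i with
  | ofNat n => simp only [Int.ofNat_eq_coe, zpow_natCast, Equiv.Perm.coe_pow]
               exact e.continuous.iterate n
  | negSucc n =>
      simp only [zpow_negSucc, ← inv_pow, Equiv.Perm.coe_pow]
      have : ⇑(e.toEquiv⁻¹) = ⇑e.symm := rfl
      rw [this]
      exact e.symm.continuous.iterate (n+1)

set_option linter.unusedSectionVars false in
lemma isClosed_rel_aux (e : X ≃ₜ X) (δ : ℝ) :
    IsClosed {p : X × X | p.2 ∈ gamma e δ p.1} := by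
  have : {p : X × X | p.2 ∈ gamma e δ p.1} =
      ⋂ i : ℤ, {p : X × X | dist ((e.toEquiv ^ i) p.1) ((e.toEquiv ^ i) p.2) ≤ δ} := by
    ext p; simp [gamma]
  rw [this]
  refine isClosed_iInter fun i => isClosed_le ?_ continuous_const
  exact ((continuous_zpow_aux e i).comp continuous_fst).dist
    ((continuous_zpow_aux e i).comp continuous_snd)

set_option linter.unusedSectionVars false in
lemma isClosed_gamma_aux (e : X ≃ₜ X) (δ : ℝ) (x : X) : IsClosed (gamma e δ x) := by
  have : gamma e δ x = (fun y => ((x : X), y)) ⁻¹' {p : X × X | p.2 ∈ gamma e δ p.1} := rfl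
  rw [this]
  exact (isClosed_rel_aux e δ).preimage (Continuous.prodMk_right x)

set_option linter.unusedSectionVars false in
lemma gamma_upper_aux (e : X ≃ₜ X) (δ : ℝ) {x₀ : X} {U : Set X} (hU : IsOpen U)
    (h : gamma e δ x₀ ⊆ U) : ∀ᶠ x in 𝓝 x₀, gamma e δ x ⊆ U := by
  set K := Prod.fst '' ({p : X × X | p.2 ∈ gamma e δ p.1} ∩ (Set.univ ×ˢ Uᶜ)) with hK
  have hKcl : IsClosed K :=
    (((isClosed_rel_aux e δ).inter (isClosed_univ.prod hU.isClosed_compl)).isCompact.image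
      continuous_fst).isClosed
  have hx₀ : x₀ ∉ K := by
    rintro ⟨p, ⟨hp1, -, hp2⟩, rfl⟩
    exact hp2 (h hp1)
  filter_upwards [hKcl.isOpen_compl.mem_nhds hx₀] with x hx y hy
  by_contra hyU
  exact hx ⟨(x, y), ⟨hy, ⟨trivial, hyU⟩⟩, rfl⟩

end Aux

/-- For all `δ, ε > 0`, the set `C(δ,ε)` of Borel probability measures giving
mass at least `ε` to some dynamical `δ`-ball is weak* closed. -/
theorem C_isClosed (e : X ≃ₜ X) {δ ε : ℝ} (hδ : 0 < δ) (hε : 0 < ε) :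
    IsClosed {μ : ProbabilityMeasure X |
      ∃ x : X, ENNReal.ofReal ε ≤ μ.toMeasure (gamma e δ x)} := by
  classical
  open Metric Set in
  rcases isEmpty_or_nonempty X with hX | hX
  · have : IsEmpty (ProbabilityMeasure X) := by
      constructor; intro μ
      have h1 : μ.toMeasure Set.univ = 1 := measure_univ
      rw [Set.univ_eq_empty_iff.2 hX, measure_empty] at h1
      exact one_ne_zero h1.symm
    have : {μ : ProbabilityMeasure X |
        ∃ x : X, ENNReal.ofReal ε ≤ μ.toMeasure (gamma e δ x)} = ∅ :=
      Set.eq_empty_of_isEmpty _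
    rw [this]; exact isClosed_empty
  set S := {μ : ProbabilityMeasure X |
      ∃ x : X, ENNReal.ofReal ε ≤ μ.toMeasure (gamma e δ x)} with hS
  rw [isClosed_iff_clusterPt]
  intro μ hμ
  set w : ProbabilityMeasure X → X := fun ν =>
    if h : ∃ x, ENNReal.ofReal ε ≤ ν.toMeasure (gamma e δ x) then h.choose
    else Classical.arbitrary X with hw
  have hwspec : ∀ ν ∈ S, ENNReal.ofReal ε ≤ ν.toMeasure (gamma e δ (w ν)) := by
    intro ν hν
    have h' : ∃ x, ENNReal.ofReal ε ≤ ν.toMeasure (gamma e δ x) := hν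
    simp only [hw]
    rw [dif_pos h']
    exact h'.choose_spec
  set L := 𝓝 μ ⊓ 𝓟 S with hL
  have hne : NeBot L := hμ
  obtain ⟨x₀, hx₀⟩ := exists_clusterPt_of_compactSpace (map w L)
  set L' := L ⊓ comap w (𝓝 x₀) with hL'
  have hne' : NeBot L' := by
    have h1 : NeBot (map w L ⊓ 𝓝 x₀) := by
      rw [inf_comm]; exact hx₀
    rw [← Filter.push_pull] at h1
    exact (Filter.map_neBot_iff w).mp h1
  have htw : Tendsto w L' (𝓝 x₀) := tendsto_comap.mono_left inf_le_right
  have hid : Tendsto (id : ProbabilityMeasure X → ProbabilityMeasure X) L' (𝓝 μ) :=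
    tendsto_id.mono_left (inf_le_left.trans inf_le_left)
  have hmemS : ∀ᶠ ν in L', ν ∈ S :=
    (inf_le_left.trans inf_le_right : L' ≤ 𝓟 S) (Filter.mem_principal_self S)
  refine ⟨x₀, ?_⟩
  rw [Set.measure_eq_iInf_isOpen]
  refine le_iInf fun U => le_iInf fun hΓU => le_iInf fun hUopen => ?_
  obtain ⟨r, hr, hthick⟩ :=
    (isClosed_gamma_aux e δ x₀).isCompact.exists_thickening_subset_open hUopen hΓU
  set F := cthickening (r / 2) (gamma e δ x₀) with hF
  have hFU : F ⊆ U :=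
    (cthickening_subset_thickening' hr (by linarith) _).trans hthick
  have hVF : thickening (r / 2) (gamma e δ x₀) ⊆ F := thickening_subset_cthickening _ _
  have hev : ∀ᶠ ν in L', gamma e δ (w ν) ⊆ F := by
    have hsub : gamma e δ x₀ ⊆ thickening (r / 2) (gamma e δ x₀) :=
      self_subset_thickening (by linarith) _
    filter_upwards [htw.eventually (gamma_upper_aux e δ isOpen_thickening hsub)] with ν h
    exact h.trans hVF
  have hev2 : ∀ᶠ ν in L', ENNReal.ofReal ε ≤ ν.toMeasure F := by
    filter_upwards [hev, hmemS] with ν h1 h2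
    exact (hwspec ν h2).trans (measure_mono h1)
  have hlim : L'.limsup (fun ν : ProbabilityMeasure X => ν.toMeasure F) ≤ μ.toMeasure F :=
    ProbabilityMeasure.limsup_measure_closed_le_of_tendsto hid (isClosed_cthickening)
  have hεle : ENNReal.ofReal ε ≤
      L'.limsup (fun ν : ProbabilityMeasure X => ν.toMeasure F) := by
    calc ENNReal.ofReal ε = L'.limsup (fun _ => ENNReal.ofReal ε) := (limsup_const _).symm
    _ ≤ _ := limsup_le_limsup hev2
  exact (hεle.trans hlim).trans (measure_mono hFU)
end

section
/- The set of expansive measures is a face of $\mathcal{M}(X)$: if $\mu = (1-t)\mu_1 + t\mu_2$ with $t \in (0,1)$ and $\mu$ expansive, then both $\mu_1$ and $\mu_2$ are expansive. Moreover, if $\mu$ is expansive, then $\mu$ is not a Dirac measure. -/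
open MeasureTheory Topology Filter

variable {X : Type*} [MetricSpace X] [CompactSpace X] [MeasurableSpace X] [BorelSpace X]

/-- The expansive measures form a face of `𝓜(X)`: if a convex combination is
expansive then so are both components; moreover no expansive measure is a
Dirac point mass. -/
theorem expansive_face (e : X ≃ₜ X) (μ μ₁ μ₂ : Measure X)
    [IsProbabilityMeasure μ] [IsProbabilityMeasure μ₁] [IsProbabilityMeasure μ₂]
    {t : ℝ} (ht0 : 0 < t) (ht1 : t < 1)
    (hcomb : μ = ENNReal.ofReal (1 - t) • μ₁ + ENNReal.ofReal t • μ₂)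
    (hμ : IsExpansiveMeasure e μ) :
    (IsExpansiveMeasure e μ₁ ∧ IsExpansiveMeasure e μ₂) ∧
      ∀ x : X, μ ≠ MeasureTheory.Measure.dirac x := by
  obtain ⟨δ, hδ, hnull⟩ := hμ
  have h1t : (0:ℝ) < 1 - t := by linarith
  have key : ∀ x, μ₁ (gamma e δ x) = 0 ∧ μ₂ (gamma e δ x) = 0 := by
    intro x
    have h := hnull x
    rw [hcomb] at h
    simp only [Measure.add_apply, Measure.smul_apply, smul_eq_mul] at h
    have h' := add_eq_zero.mp h
    constructor
    · have := h'.1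
      rcases mul_eq_zero.mp this with h0 | h0
      · exact absurd h0 (by simp [ENNReal.ofReal_eq_zero]; linarith)
      · exact h0
    · have := h'.2
      rcases mul_eq_zero.mp this with h0 | h0
      · exact absurd h0 (by simp [ENNReal.ofReal_eq_zero]; linarith)
      · exact h0
  refine ⟨⟨⟨δ, hδ, fun x => (key x).1⟩, ⟨δ, hδ, fun x => (key x).2⟩⟩, ?_⟩
  intro x hx
  have hmem : x ∈ gamma e δ x := fun i => by simp [hδ.le]
  have : μ (gamma e δ x) ≥ μ {x} := measure_mono (Set.singleton_subset_iff.mpr hmem)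
  rw [hnull x, hx] at this
  simp [Measure.dirac_apply' _ (measurableSet_singleton x)] at this
end

section
/- Let $f$ be a homeomorphism of a compact metric space $X$ admitting at least one expansive measure. Then there is a meagre subset $\mathcal{D}$ of the set $\mathcal{M}_{ex}(X,f)$ of expansive measures (with the weak* topology) such that every $\mu \in \mathcal{M}_{ex}(X,f) \setminus \mathcal{D}$ satisfies $\mathrm{supp}(\mu) = \overline{\bigcup_{\nu \in \mathcal{M}_{ex}(X,f)} \mathrm{supp}(\nu)}$, i.e., its support contains the support of every other expansive measure. -/
open MeasureTheory Topology Filter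
open scoped ENNReal NNReal

variable {X : Type*} [MetricSpace X] [CompactSpace X] [MeasurableSpace X] [BorelSpace X]

/-- The support of a measure is closed. -/
lemma isClosed_msupp (μ : Measure X) : IsClosed (msupp μ) := by
  rw [← isOpen_compl_iff, isOpen_iff_mem_nhds]
  intro x hx
  simp only [Set.mem_compl_iff, msupp, Set.mem_setOf_eq, not_forall] at hx
  obtain ⟨U, hU, hU0⟩ := hx
  have hle : μ U = 0 := by simpa [pos_iff_ne_zero] using hU0
  refine Filter.mem_of_superset (interior_mem_nhds.mpr hU) ?_
  intro y hy
  simp only [Set.mem_compl_iff, msupp, Set.mem_setOf_eq, not_forall]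
  refine ⟨interior U, isOpen_interior.mem_nhds hy, ?_⟩
  have : μ (interior U) = 0 :=
    le_antisymm (hle ▸ measure_mono interior_subset) (zero_le)
  simp [this]

/-- For an open set `U`, the set of probability measures assigning zero mass to `U`
is closed in the topology of weak convergence. -/
lemma isClosed_null_of_isOpen {U : Set X} (hU : IsOpen U) :
    IsClosed {ν : ProbabilityMeasure X | (ν : Measure X) U = 0} := by
  rw [isClosed_iff_clusterPt]
  intro a ha
  have hne : (𝓝 a ⊓ 𝓟 {ν : ProbabilityMeasure X | (ν : Measure X) U = 0}).NeBot := ha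
  have htend : Tendsto id (𝓝 a ⊓ 𝓟 {ν : ProbabilityMeasure X | (ν : Measure X) U = 0})
      (𝓝 a) := tendsto_id'.mpr inf_le_left
  have hlim := ProbabilityMeasure.le_liminf_measure_open_of_tendsto htend hU
  have hev : ∀ᶠ ν in 𝓝 a ⊓ 𝓟 {ν : ProbabilityMeasure X | (ν : Measure X) U = 0},
      (fun ν : ProbabilityMeasure X => (ν : Measure X) U) (id ν) = 0 := by
    refine mem_inf_of_right ?_
    exact fun ν hν => hν
  have : Filter.liminf (fun ν : ProbabilityMeasure X => ((id ν : ProbabilityMeasure X) :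
      Measure X) U) (𝓝 a ⊓ 𝓟 {ν : ProbabilityMeasure X | (ν : Measure X) U = 0}) = 0 := by
    rw [Filter.liminf_congr hev]
    exact Filter.liminf_const 0
  have h0 : (a : Measure X) U ≤ 0 := le_trans hlim (le_of_eq this)
  exact le_antisymm h0 (zero_le)

/-- Expansiveness is preserved by nonnegative combinations. -/
lemma IsExpansiveMeasure.combo (e : X ≃ₜ X) {μ ν : Measure X} (hμ : IsExpansiveMeasure e μ)
    (hν : IsExpansiveMeasure e ν) (a b : ℝ≥0∞) : IsExpansiveMeasure e (a • μ + b • ν) := by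
  obtain ⟨δ₁, hδ₁, h₁⟩ := hμ
  obtain ⟨δ₂, hδ₂, h₂⟩ := hν
  refine ⟨min δ₁ δ₂, lt_min hδ₁ hδ₂, fun x => ?_⟩
  have hsub₁ : gamma e (min δ₁ δ₂) x ⊆ gamma e δ₁ x :=
    fun y hy i => le_trans (hy i) (min_le_left _ _)
  have hsub₂ : gamma e (min δ₁ δ₂) x ⊆ gamma e δ₂ x :=
    fun y hy i => le_trans (hy i) (min_le_right _ _)
  have e₁ : μ (gamma e (min δ₁ δ₂) x) = 0 :=
    le_antisymm ((h₁ x) ▸ measure_mono hsub₁) (zero_le)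
  have e₂ : ν (gamma e (min δ₁ δ₂) x) = 0 :=
    le_antisymm ((h₂ x) ▸ measure_mono hsub₂) (zero_le)
  simp [Measure.add_apply, Measure.smul_apply, e₁, e₂]

/-- If `f` has an expansive measure, then off a meagre subset of the set
`𝓜_ex(X,f)` of expansive measures, every expansive measure has support equal to
the closure of the union of the supports of all expansive measures. -/
theorem generic_full_expansive_support (e : X ≃ₜ X)
    (hne : {μ : ProbabilityMeasure X | IsExpansiveMeasure e μ.toMeasure}.Nonempty) :
    ∃ D : Set {μ : ProbabilityMeasure X | IsExpansiveMeasure e μ.toMeasure},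
      IsMeagre D ∧
      ∀ μ : {μ : ProbabilityMeasure X | IsExpansiveMeasure e μ.toMeasure}, μ ∉ D →
        msupp (μ : ProbabilityMeasure X).toMeasure =
          closure (⋃ ν ∈ {μ : ProbabilityMeasure X | IsExpansiveMeasure e μ.toMeasure},
            msupp ν.toMeasure) := by
  classical
  set E : Set (ProbabilityMeasure X) :=
    {μ : ProbabilityMeasure X | IsExpansiveMeasure e μ.toMeasure} with hEdef
  obtain ⟨B, hBc, -, hB⟩ := TopologicalSpace.exists_countable_basis X
  -- For an open set `U`, the "bad" set of expansive measures giving mass `0` to `U`.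
  set bad : Set X → Set ↥E := fun U => {μ : ↥E | (μ : ProbabilityMeasure X).toMeasure U = 0}
    with hbad
  -- The collection of relevant bad sets.
  set S : Set (Set ↥E) :=
    bad '' {U | U ∈ B ∧ ∃ ν ∈ E, ν.toMeasure U ≠ 0} with hS
  -- Key density lemma: if some expansive measure charges open `U`, then the set of
  -- expansive measures charging `U` is dense in `E`.
  have hdense : ∀ U : Set X, IsOpen U → (∃ ν ∈ E, ν.toMeasure U ≠ 0) →
      Dense ((bad U)ᶜ) := by
    intro U hUopen ⟨ν, hνE, hνU⟩
    intro μ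
    -- convex combinations `(1 - 1/(n+1)) μ + (1/(n+1)) ν`
    set t : ℕ → ℝ≥0∞ := fun n => ((n : ℝ≥0∞) + 1)⁻¹ with ht
    have htle : ∀ n, t n ≤ 1 := fun n => ENNReal.inv_le_one.mpr le_add_self
    have htne0 : ∀ n, t n ≠ 0 := fun n =>
      ENNReal.inv_ne_zero.mpr
        (ENNReal.add_ne_top.mpr ⟨ENNReal.natCast_ne_top n, ENNReal.one_ne_top⟩)
    set m : ℕ → Measure X := fun n =>
      (1 - t n) • ((μ : ProbabilityMeasure X) : Measure X) + t n • (ν : Measure X) with hm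
    have hmprob : ∀ n, IsProbabilityMeasure (m n) := by
      intro n
      constructor
      simp [hm, Measure.add_apply, Measure.smul_apply, measure_univ, smul_eq_mul,
        tsub_add_cancel_of_le (htle n)]
    set mix : ℕ → ProbabilityMeasure X := fun n => ⟨m n, hmprob n⟩ with hmix
    have hmixE : ∀ n, mix n ∈ E := by
      intro n
      exact IsExpansiveMeasure.combo e (μ : ↥E).2 hνE _ _
    have hmixU : ∀ n, (mix n).toMeasure U ≠ 0 := by
      intro n
      have : 0 < t n * (ν : Measure X) U :=
        ENNReal.mul_pos (htne0 n) hνU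
      have hle : t n * (ν : Measure X) U ≤ m n U := by
        simp only [hm, Measure.add_apply, Measure.smul_apply, smul_eq_mul]
        exact le_add_self
      exact pos_iff_ne_zero.mp (lt_of_lt_of_le this hle)
    -- the sequence `mix` tends to `μ`
    have htendt : Tendsto t atTop (𝓝 0) := by
      have h1 : Tendsto (fun n : ℕ => ((n + 1 : ℕ) : ℝ≥0∞)⁻¹) atTop (𝓝 0) :=
        ENNReal.tendsto_inv_nat_nhds_zero.comp (tendsto_add_atTop_nat 1)
      convert h1 using 2 with n
      rw [ht]
      push_cast
      ring_nf
    have htend : Tendsto (fun n => (mix n : ProbabilityMeasure X)) atTop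
        (𝓝 (μ : ProbabilityMeasure X)) := by
      rw [ProbabilityMeasure.tendsto_iff_forall_lintegral_tendsto]
      intro f
      have hboundμ : ∫⁻ x, f x ∂((μ : ProbabilityMeasure X) : Measure X) ≠ ⊤ :=
        (BoundedContinuousFunction.lintegral_lt_top_of_nnreal _ f).ne
      have hboundν : ∫⁻ x, f x ∂(ν : Measure X) ≠ ⊤ :=
        (BoundedContinuousFunction.lintegral_lt_top_of_nnreal _ f).ne
      have hint : ∀ n, ∫⁻ x, f x ∂((mix n : ProbabilityMeasure X) : Measure X) =
          (1 - t n) * ∫⁻ x, f x ∂((μ : ProbabilityMeasure X) : Measure X) +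
            t n * ∫⁻ x, f x ∂(ν : Measure X) := by
        intro n
        show ∫⁻ x, f x ∂(m n) = _
        rw [hm]
        simp [lintegral_add_measure, lintegral_smul_measure]
      simp only [hint]
      have h1 : Tendsto (fun n => (1 - t n)) atTop (𝓝 1) := by
        have : Tendsto (fun n => (1 : ℝ≥0∞) - t n) atTop (𝓝 (1 - 0)) :=
          (ENNReal.continuous_sub_left ENNReal.one_ne_top).continuousAt.tendsto.comp htendt
        simpa using this
      have hterm1 : Tendsto
          (fun n => (1 - t n) * ∫⁻ x, f x ∂((μ : ProbabilityMeasure X) : Measure X)) atTop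
          (𝓝 (1 * ∫⁻ x, f x ∂((μ : ProbabilityMeasure X) : Measure X))) :=
        ENNReal.Tendsto.mul_const h1 (Or.inl one_ne_zero)
      have hterm2 : Tendsto (fun n => t n * ∫⁻ x, f x ∂(ν : Measure X)) atTop
          (𝓝 (0 * ∫⁻ x, f x ∂(ν : Measure X))) :=
        ENNReal.Tendsto.mul_const htendt (Or.inr hboundν)
      have := hterm1.add hterm2
      simpa using this
    -- conclude density
    have htendsub : Tendsto (fun n => (⟨mix n, hmixE n⟩ : ↥E)) atTop (𝓝 μ) := by
      rw [tendsto_subtype_rng]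
      exact htend
    refine mem_closure_of_tendsto htendsub ?_
    filter_upwards with n
    simp only [Set.mem_compl_iff, hbad, Set.mem_setOf_eq]
    exact hmixU n
  -- each element of `S` is nowhere dense
  have hND : ∀ A ∈ S, IsNowhereDense A := by
    rintro A ⟨U, ⟨hUB, hcharge⟩, rfl⟩
    have hUopen : IsOpen U := hB.isOpen hUB
    have hclosed : IsClosed (bad U) := by
      have : bad U = (Subtype.val : ↥E → ProbabilityMeasure X) ⁻¹'
          {ν : ProbabilityMeasure X | (ν : Measure X) U = 0} := rfl
      rw [this]
      exact (isClosed_null_of_isOpen hUopen).preimage continuous_subtype_val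
    rw [hclosed.isNowhereDense_iff, interior_eq_empty_iff_dense_compl]
    exact hdense U hUopen hcharge
  refine ⟨⋃₀ S, ?_, ?_⟩
  · refine isMeagre_iff_countable_union_isNowhereDense.mpr ⟨S, hND, ?_, subset_rfl⟩
    exact (hBc.mono (Set.sep_subset _ _)).image _
  · intro μ hμD
    apply Set.Subset.antisymm
    · refine Set.Subset.trans ?_ subset_closure
      exact Set.subset_biUnion_of_mem (u := fun ν : ProbabilityMeasure X => msupp ν.toMeasure)
        (show (↑μ : ProbabilityMeasure X) ∈ E from μ.2)
    · rw [(isClosed_msupp _).closure_subset_iff]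
      rintro x hx
      simp only [Set.mem_iUnion] at hx
      obtain ⟨ν, hνE, hxν⟩ := hx
      intro U hU
      obtain ⟨V, hVB, hxV, hVU⟩ := hB.mem_nhds_iff.mp hU
      have hνV : ν.toMeasure V ≠ 0 :=
        pos_iff_ne_zero.mp (hxν V ((hB.isOpen hVB).mem_nhds hxV))
      have hVS : bad V ∈ S := ⟨V, ⟨hVB, ν, hνE, hνV⟩, rfl⟩
      have hμV : (μ : ProbabilityMeasure X).toMeasure V ≠ 0 := by
        intro h0
        exact hμD (Set.mem_sUnion.mpr ⟨bad V, hVS, h0⟩)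
      calc (0 : ℝ≥0∞) < (μ : ProbabilityMeasure X).toMeasure V := pos_iff_ne_zero.mpr hμV
        _ ≤ (μ : ProbabilityMeasure X).toMeasure U := measure_mono hVU
end
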